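/- arXiv:1305.2307 — 3 statements merged into one kernel-verified Lean document; each statement's English description precedes it below -/
import Mathlib

section
/- First integration lemma: Let α > 0, let F ⊂ X be a measurable subset, and let Φ be a nonnegative measurable function on X⁺. Then ∫_F ∬_{Γ^α(x)} Φ(y,t) dμ(y) dt dμ(x) ≤ ∬_{Γ^α(F)} Φ(y,t) V(y,αt) dμ(y) dt. -/
open MeasureTheory Metric Set
open scoped ENNReal NNReal

noncomputable section

variable {X : Type*}

/-- The measure `dμ(y) dt/t` on `X⁺ = X × (0,∞)`, modelled on `X × ℝ`
(supported on `{t > 0}`). -/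
def upHalf [MeasurableSpace X] (μ : Measure X) : Measure (X × ℝ) :=
  μ.prod ((volume.restrict (Set.Ioi (0:ℝ))).withDensity fun t => ENNReal.ofReal t⁻¹)

/-- The measure `dμ(y) dt` on `X⁺` (supported on `{t > 0}`). -/
def upHalf' [MeasurableSpace X] (μ : Measure X) : Measure (X × ℝ) :=
  μ.prod (volume.restrict (Set.Ioi (0:ℝ)))

/-- Cone of aperture `α` with vertex `x`. -/
def coneAt [PseudoMetricSpace X] (α : ℝ) (x : X) : Set (X × ℝ) :=
  {p | dist p.1 x < α * p.2}

/-- Tent of aperture `α` over `O ⊆ X`: the complement in `X⁺` of the union of the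
cones of aperture `α` with vertices outside `O`. -/
def tentOver [PseudoMetricSpace X] (α : ℝ) (O : Set X) : Set (X × ℝ) :=
  {p | 0 < p.2 ∧ ∀ x ∉ O, α * p.2 ≤ dist p.1 x}

/-- The `α`-shadow of `C ⊆ X⁺`: points whose cone meets `C`. -/
def shadowOf [PseudoMetricSpace X] (α : ℝ) (C : Set (X × ℝ)) : Set X :=
  {x | ∃ p ∈ C, p ∈ coneAt α x}

/-- The operator `A_q^α`:
`A_q^α(f)(x) = (∬_{Γ^α(x)} |f(y,t)|^q dμ(y)/V(y,αt) dt/t)^{1/q}`. -/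
def Afun [PseudoMetricSpace X] [MeasurableSpace X] (μ : Measure X) (q α : ℝ)
    (f : X × ℝ → ℝ) (x : X) : ℝ≥0∞ :=
  (∫⁻ p in coneAt α x,
      ENNReal.ofReal (|f p| ^ q) / μ (ball p.1 (α * p.2)) ∂upHalf μ) ^ (1/q)

/-- The truncated operator `A_q^α(·|h)`, integrating over the truncated cone
`Γ_h^α(x)`. -/
def AfunT [PseudoMetricSpace X] [MeasurableSpace X] (μ : Measure X) (q α h : ℝ)
    (f : X × ℝ → ℝ) (x : X) : ℝ≥0∞ :=
  (∫⁻ p in coneAt α x ∩ {p : X × ℝ | p.2 < h},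
      ENNReal.ofReal (|f p| ^ q) / μ (ball p.1 (α * p.2)) ∂upHalf μ) ^ (1/q)

/-- The Carleson operator `C_q^α`:
`C_q^α(f)(x) = sup_{B ∋ x} (μ(B)⁻¹ ∬_{T^α(B)} |f(y,t)|^q dμ(y) dt/t)^{1/q}`,
the supremum being over open balls containing `x`. -/
def Cfun [PseudoMetricSpace X] [MeasurableSpace X] (μ : Measure X) (q α : ℝ)
    (f : X × ℝ → ℝ) (x : X) : ℝ≥0∞ :=
  ⨆ (z : X) (ρ : ℝ) (_ : 0 < ρ ∧ x ∈ ball z ρ),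
    ((μ (ball z ρ))⁻¹ *
      ∫⁻ p in tentOver α (ball z ρ), ENNReal.ofReal (|f p| ^ q) ∂upHalf μ) ^ (1/q)

/-- The tent space quasi-norm `‖f‖_{T^{p,q,α}} = ‖A_q^α(f)‖_{L^p(X)}`. -/
def tNorm [PseudoMetricSpace X] [MeasurableSpace X] (μ : Measure X) (p q α : ℝ)
    (f : X × ℝ → ℝ) : ℝ≥0∞ :=
  (∫⁻ x, Afun μ q α f x ^ p ∂μ) ^ (1/p)

/-- The uncentred Hardy–Littlewood maximal operator applied to an
`ℝ≥0∞`-valued function. -/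
def maxFun [PseudoMetricSpace X] [MeasurableSpace X] (μ : Measure X)
    (g : X → ℝ≥0∞) (x : X) : ℝ≥0∞ :=
  ⨆ (z : X) (ρ : ℝ) (_ : 0 < ρ ∧ x ∈ ball z ρ),
    (μ (ball z ρ))⁻¹ * ∫⁻ y in ball z ρ, g y ∂μ

/-- `μ` is doubling: `V(x,2r) ≤ C V(x,r)` for all `x`, `r > 0`. -/
def DoublingMeas [PseudoMetricSpace X] [MeasurableSpace X] (μ : Measure X) : Prop :=
  ∃ C > (0:ℝ), ∀ (x : X) (r : ℝ), 0 < r →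
    μ (ball x (2 * r)) ≤ ENNReal.ofReal C * μ (ball x r)

/-! Since `p ∈ Γ^α(x)` iff `x ∈ B(y, αt)` for `p = (y, t)`, Tonelli turns the left-hand side into
`∬ Φ(y,t) μ(B(y,αt) ∩ F) dμ(y) dt`, whose integrand vanishes off `Γ^α(F)`. Tonelli needs the cone
relation to be measurable in `X × X⁺`, which holds because `X` is second countable: a maximal
`ε`-separated set is countable, its `ε/2`-balls being disjoint and of positive measure. -/

namespace Metric

variable [PseudoMetricSpace X]

theorem exists_maximal_isSeparated (ε : ℝ≥0∞) (s : Set X) :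
    ∃ N, Maximal (fun N ↦ N ⊆ s ∧ IsSeparated ε N) N :=
  zorn_subset {N | N ⊆ s ∧ IsSeparated ε N} fun c hcS hc ↦
    ⟨⋃₀ c, ⟨sUnion_subset fun _ hN ↦ (hcS hN).1,
      (pairwise_sUnion hc.directedOn).2 fun _ hN ↦ (hcS hN).2⟩, fun _ ↦ subset_sUnion_of_mem⟩

theorem IsSeparated.countable_of_measure_ball_pos [MeasurableSpace X] [OpensMeasurableSpace X]
    {μ : Measure X} [SFinite μ] (hpos : ∀ (x : X) (r : ℝ), 0 < r → 0 < μ (ball x r))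
    {ε : ℝ≥0} (hε : 0 < ε) {N : Set X} (hN : IsSeparated ε N) : N.Countable := by
  have hdisj : Pairwise (Function.onFun Disjoint fun x : N ↦ ball (x : X) (ε / 2)) := by
    intro x y hxy
    refine disjoint_left.2 fun z hzx hzy ↦ ?_
    have hsep : (ε : ℝ≥0∞) < edist (x : X) y := hN x.2 y.2 (Subtype.coe_ne_coe.2 hxy)
    rw [edist_nndist, ENNReal.coe_lt_coe, ← NNReal.coe_lt_coe, coe_nndist] at hsep
    have := dist_triangle_left (x : X) y z
    rw [mem_ball] at hzx hzy
    linarith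
  have hcount := Measure.countable_meas_pos_of_disjoint_iUnion (μ := μ)
    (fun _ ↦ measurableSet_ball) hdisj
  have hall : {x : N | 0 < μ (ball (x : X) (ε / 2))} = univ :=
    eq_univ_of_forall fun x ↦ hpos x _ (by positivity)
  rw [hall, countable_univ_iff] at hcount
  exact countable_coe_iff.1 hcount

theorem secondCountableTopology_of_measure_ball_pos [MeasurableSpace X] [OpensMeasurableSpace X]
    (μ : Measure X) [SFinite μ] (hpos : ∀ (x : X) (r : ℝ), 0 < r → 0 < μ (ball x r)) :
    SecondCountableTopology X := by
  refine secondCountable_of_almost_dense_set fun ε hε ↦ ?_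
  obtain ⟨N, hN⟩ := exists_maximal_isSeparated (ε.toNNReal : ℝ≥0∞) (univ : Set X)
  refine ⟨N, hN.prop.2.countable_of_measure_ball_pos hpos (Real.toNNReal_pos.2 hε), fun x ↦ ?_⟩
  have hx := (IsCover.of_maximal_isSeparated hN).subset_iUnion_closedBall (mem_univ x)
  simpa only [mem_iUnion, mem_closedBall, Real.coe_toNNReal _ hε.le, exists_prop] using hx

end Metric

instance [MeasurableSpace X] (μ : Measure X) [SFinite μ] : SFinite (upHalf' μ) := by
  unfold upHalf'
  infer_instance

section Cones

variable [PseudoMetricSpace X]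

theorem mem_coneAt_iff_mem_ball {α : ℝ} {x : X} {p : X × ℝ} :
    p ∈ coneAt α x ↔ x ∈ ball p.1 (α * p.2) := by
  rw [mem_ball, dist_comm]
  rfl

theorem isOpen_coneAt (α : ℝ) (x : X) : IsOpen (coneAt α x) :=
  isOpen_lt (continuous_fst.dist continuous_const) (continuous_const.mul continuous_snd)

theorem measurableSet_setOf_mem_coneAt [MeasurableSpace X] [OpensMeasurableSpace X]
    [SecondCountableTopology X] (α : ℝ) :
    MeasurableSet {q : X × (X × ℝ) | q.2 ∈ coneAt α q.1} :=
  (isOpen_lt ((continuous_fst.comp continuous_snd).dist continuous_fst)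
    (continuous_const.mul (continuous_snd.comp continuous_snd))).measurableSet

theorem lintegral_lintegral_coneAt [MeasurableSpace X] [OpensMeasurableSpace X]
    [SecondCountableTopology X] (μ : Measure X) [SFinite μ] (ν : Measure (X × ℝ)) [SFinite ν]
    (α : ℝ) {Φ : X × ℝ → ℝ≥0∞} (hΦ : Measurable Φ) :
    ∫⁻ x, ∫⁻ p in coneAt α x, Φ p ∂ν ∂μ = ∫⁻ p, Φ p * μ (ball p.1 (α * p.2)) ∂ν := by
  have hmeas : Measurable (Function.uncurry fun x p ↦ (coneAt α x).indicator Φ p) :=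
    (hΦ.comp measurable_snd).indicator (measurableSet_setOf_mem_coneAt (X := X) α)
  have hinner (p : X × ℝ) :
      ∫⁻ x, (coneAt α x).indicator Φ p ∂μ = Φ p * μ (ball p.1 (α * p.2)) := by
    rw [← lintegral_indicator_const measurableSet_ball (Φ p)]
    congr with x
    classical
    simp only [indicator_apply, mem_coneAt_iff_mem_ball]
  simp_rw [← lintegral_indicator (isOpen_coneAt α _).measurableSet]
  rw [lintegral_lintegral_swap hmeas.aemeasurable]
  exact lintegral_congr hinner

theorem lintegral_mul_measure_ball_inter_le [MeasurableSpace X] (μ : Measure X)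
    (ν : Measure (X × ℝ)) (α : ℝ) (F : Set X) (Φ : X × ℝ → ℝ≥0∞) :
    ∫⁻ p, Φ p * μ (ball p.1 (α * p.2) ∩ F) ∂ν
      ≤ ∫⁻ p in ⋃ x ∈ F, coneAt α x, Φ p * μ (ball p.1 (α * p.2)) ∂ν := by
  have hsupport : (fun p ↦ Φ p * μ (ball p.1 (α * p.2) ∩ F)).support ⊆ ⋃ x ∈ F, coneAt α x := by
    intro p hp
    obtain ⟨x, hxball, hxF⟩ := nonempty_of_measure_ne_zero (right_ne_zero_of_mul hp)
    exact mem_biUnion hxF (mem_coneAt_iff_mem_ball.2 hxball)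
  rw [← setLIntegral_eq_of_support_subset hsupport]
  exact lintegral_mono fun p ↦ mul_le_mul_right (measure_mono inter_subset_left) (Φ p)

end Cones

theorem first_integration_lemma_general [MetricSpace X] [MeasurableSpace X] [BorelSpace X]
    (μ : Measure X) [SigmaFinite μ]
    (hpos : ∀ (x : X) (r : ℝ), 0 < r → 0 < μ (ball x r))
    (α : ℝ) (F : Set X)
    (Φ : X × ℝ → ℝ≥0∞) (hΦ : Measurable Φ) :
    ∫⁻ x in F, ∫⁻ p in coneAt α x, Φ p ∂upHalf' μ ∂μ
      ≤ ∫⁻ p in ⋃ x ∈ F, coneAt α x, Φ p * μ (ball p.1 (α * p.2)) ∂upHalf' μ := by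
  have := secondCountableTopology_of_measure_ball_pos μ hpos
  calc ∫⁻ x in F, ∫⁻ p in coneAt α x, Φ p ∂upHalf' μ ∂μ
      = ∫⁻ p, Φ p * μ (ball p.1 (α * p.2) ∩ F) ∂upHalf' μ := by
        rw [lintegral_lintegral_coneAt _ _ α hΦ]
        simp_rw [Measure.restrict_apply measurableSet_ball]
    _ ≤ _ := lintegral_mul_measure_ball_inter_le μ _ α F Φ

/-- **First integration lemma.** For `α > 0`, `F ⊆ X` measurable and
`Φ : X⁺ → [0,∞]` measurable,
`∫_F ∬_{Γ^α(x)} Φ(y,t) dμ(y) dt dμ(x) ≤ ∬_{Γ^α(F)} Φ(y,t) V(y,αt) dμ(y) dt`. -/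
theorem first_integration_lemma [MetricSpace X] [MeasurableSpace X] [BorelSpace X]
    (μ : Measure X) [SigmaFinite μ]
    (hpos : ∀ (x : X) (r : ℝ), 0 < r → 0 < μ (ball x r))
    (hfin : ∀ (x : X) (r : ℝ), 0 < r → μ (ball x r) < ∞)
    (α : ℝ) (hα : 0 < α) (F : Set X) (hF : MeasurableSet F)
    (Φ : X × ℝ → ℝ≥0∞) (hΦ : Measurable Φ) :
    ∫⁻ x in F, ∫⁻ p in coneAt α x, Φ p ∂upHalf' μ ∂μ
      ≤ ∫⁻ p in ⋃ x ∈ F, coneAt α x, Φ p * μ (ball p.1 (α * p.2)) ∂upHalf' μ :=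
  first_integration_lemma_general μ hpos α F Φ hΦ
end
end

section
/- Density of cylindrically supported L^q functions in tent spaces: Let μ be doubling and let p, q, α ∈ (0,∞). If f is a measurable function on X⁺ with ‖f‖_{T^{p,q,α}} < ∞, then for every ε > 0 there exists a measurable function g on X⁺ with cylindrical support satisfying g ∈ L^q(X⁺, dμ(y) dt/t) and ‖f − g‖_{T^{p,q,α}} < ε; indeed, for any fixed x₀ ∈ X one may take g = 1_{B(x₀,n) × (1/n, n)} f for n large enough. -/
open MeasureTheory Metric Set
open scoped ENNReal NNReal

noncomputable section

variable {X : Type*}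

/-!
Write `K_n = B(x₀,n) × (1/n,n)`. Since the `K_n` increase to `X⁺`, for every `x` with
`A_q^α f(x) < ∞` the integral of `|f|^q / V(y,αt)` over `Γ^α(x) \ K_n` tends to `0`; as
`A_q^α f < ∞` a.e., dominated convergence in `L^p` gives `‖1_{K_nᶜ} f‖_{T^{p,q,α}} → 0`.

For the `L^q` bound, `V(y,αt) ≤ V(x₀, n + αn)` on `K_n`, so it suffices that `|f|^q / V(y,αt)`
is integrable over `K_n`. Doubling makes `B(x₀,n)` totally bounded, hence `K_n` is covered by
finitely many cones `Γ^α(z)`, and since balls have positive measure the vertices can be taken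
in the dense set where `A_q^α f(z) < ∞`.
-/

open Filter Topology

section Doubling

variable [PseudoMetricSpace X] [MeasurableSpace X] {μ : Measure X}

lemma measure_ball_two_pow_mul_le {C : ℝ≥0∞}
    (hC : ∀ (x : X) (r : ℝ), 0 < r → μ (ball x (2 * r)) ≤ C * μ (ball x r))
    (x : X) {r : ℝ} (hr : 0 < r) (j : ℕ) :
    μ (ball x (2 ^ j * r)) ≤ C ^ j * μ (ball x r) := by
  induction j with
  | zero => simp
  | succ j ih =>
    calc μ (ball x (2 ^ (j + 1) * r)) = μ (ball x (2 * (2 ^ j * r))) := by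
          rw [pow_succ', mul_assoc]
      _ ≤ C * μ (ball x (2 ^ j * r)) := hC x _ (by positivity)
      _ ≤ C * (C ^ j * μ (ball x r)) := by gcongr
      _ = C ^ (j + 1) * μ (ball x r) := by ring

lemma DoublingMeas.exists_le_measure_ball (hdb : DoublingMeas μ)
    (hpos : ∀ (x : X) (r : ℝ), 0 < r → 0 < μ (ball x r)) (x₀ : X) {R r : ℝ}
    (hR : 0 < R) (hr : 0 < r) :
    ∃ c ≠ 0, ∀ y ∈ ball x₀ R, c ≤ μ (ball y r) := by
  obtain ⟨C, -, hC⟩ := hdb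
  obtain ⟨j, hj⟩ := pow_unbounded_of_one_lt (2 * R / r) one_lt_two
  refine ⟨μ (ball x₀ R) / ENNReal.ofReal C ^ j, (ENNReal.div_pos (hpos x₀ R hR).ne'
    (ENNReal.pow_ne_top ENNReal.ofReal_ne_top)).ne', fun y hy => ENNReal.div_le_of_le_mul ?_⟩
  have hsub : ball x₀ R ⊆ ball y (2 ^ j * r) := by
    refine ball_subset_ball' ?_
    have := (div_lt_iff₀ hr).1 hj
    have := mem_ball'.1 hy
    linarith
  calc μ (ball x₀ R) ≤ μ (ball y (2 ^ j * r)) := measure_mono hsub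
    _ ≤ ENNReal.ofReal C ^ j * μ (ball y r) := measure_ball_two_pow_mul_le hC y hr j
    _ = μ (ball y r) * ENNReal.ofReal C ^ j := mul_comm _ _

variable [OpensMeasurableSpace X]

/-- The `ε/2`-balls around an `ε`-separated subset of `A` are disjoint, each of measure at
least `c`, inside a set of finite measure; this bounds the size of the subset. -/
lemma packingNumber_ne_top_of_le_measure_ball {A : Set X} {ε : ℝ≥0} {c : ℝ≥0∞} (hc : c ≠ 0)
    (hA : ∀ y ∈ A, c ≤ μ (ball y (ε / 2))) (hfin : μ (⋃ y ∈ A, ball y (ε / 2)) ≠ ⊤) :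
    packingNumber ε A ≠ ⊤ := by
  obtain ⟨n, hn⟩ := ENNReal.exists_nat_gt (ENNReal.div_ne_top hfin hc)
  refine ne_top_of_le_ne_top (ENat.natCast_ne_top n) (iSup₂_le fun C hCA => iSup_le fun hC => ?_)
  have hdisj : Pairwise (Function.onFun Disjoint fun y : C => ball (y : X) (ε / 2)) := by
    intro y z hyz
    refine ball_disjoint_ball ?_
    have hsep : (ε : ℝ≥0∞) < edist (y : X) z := hC y.2 z.2 (Subtype.coe_ne_coe.2 hyz)
    rw [edist_nndist, ENNReal.coe_lt_coe, ← NNReal.coe_lt_coe, coe_nndist] at hsep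
    linarith
  have hmass : (C.encard : ℝ≥0∞) * c ≤ μ (⋃ y ∈ A, ball y (ε / 2)) :=
    calc (C.encard : ℝ≥0∞) * c = ∑' _ : C, c := (ENNReal.tsum_set_const C c).symm
      _ ≤ ∑' y : C, μ (ball (y : X) (ε / 2)) := ENNReal.tsum_le_tsum fun y => hA y (hCA y.2)
      _ ≤ μ (⋃ y : C, ball (y : X) (ε / 2)) :=
          tsum_meas_le_meas_iUnion_of_disjoint μ (fun _ => measurableSet_ball) hdisj
      _ ≤ μ (⋃ y ∈ A, ball y (ε / 2)) :=
          measure_mono (iUnion_subset fun y => subset_biUnion_of_mem (u := fun y => ball y _)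
            (hCA y.2))
  have : (C.encard : ℝ≥0∞) < n :=
    ((ENNReal.le_div_iff_mul_le (Or.inl hc) (Or.inr hfin)).2 hmass).trans_lt hn
  exact_mod_cast this.le

lemma DoublingMeas.totallyBounded_ball (hdb : DoublingMeas μ)
    (hpos : ∀ (x : X) (r : ℝ), 0 < r → 0 < μ (ball x r))
    (hfin : ∀ (x : X) (r : ℝ), 0 < r → μ (ball x r) < ∞) (x₀ : X) (R : ℝ) :
    TotallyBounded (ball x₀ R) := by
  rcases le_or_gt R 0 with hR | hR
  · simp [ball_eq_empty.2 hR]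
  refine Metric.totallyBounded_iff.2 fun ε hε => ?_
  set δ : ℝ≥0 := ⟨ε / 2, by positivity⟩
  have hδ : (δ : ℝ) = ε / 2 := rfl
  obtain ⟨c, hc, hcle⟩ := hdb.exists_le_measure_ball hpos x₀ hR (r := δ / 2)
    (by rw [hδ]; positivity)
  have hunion : ⋃ y ∈ ball x₀ R, ball y (δ / 2) ⊆ ball x₀ (R + δ / 2) :=
    iUnion₂_subset fun y hy => ball_subset_ball' (by linarith [mem_ball.1 hy, dist_comm y x₀])
  have hP : packingNumber δ (ball x₀ R) ≠ ⊤ := packingNumber_ne_top_of_le_measure_ball hc hcle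
    (ne_top_of_le_ne_top (hfin x₀ _ (by rw [hδ]; positivity)).ne (measure_mono hunion))
  refine ⟨maximalSeparatedSet δ (ball x₀ R),
    encard_ne_top_iff.1 (encard_maximalSeparatedSet hP ▸ hP), ?_⟩
  refine (isCover_iff_subset_iUnion_closedBall.1 (isCover_maximalSeparatedSet hP)).trans ?_
  exact iUnion₂_mono fun y _ => closedBall_subset_ball (by rw [hδ]; linarith)

end Doubling

lemma secondCountableTopology_of_totallyBounded_ball [PseudoMetricSpace X]
    (x₀ : X) (h : ∀ R : ℝ, TotallyBounded (ball x₀ R)) : SecondCountableTopology X := by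
  have : TopologicalSpace.SeparableSpace X := by
    rw [← TopologicalSpace.isSeparable_univ_iff, ← iUnion_ball_nat x₀]
    exact .iUnion fun n => (h n).isSeparable
  exact UniformSpace.secondCountable_of_separable X

lemma isOpenPosMeasure_of_measure_ball_pos [PseudoMetricSpace X] [MeasurableSpace X]
    {μ : Measure X} (hpos : ∀ (x : X) (r : ℝ), 0 < r → 0 < μ (ball x r)) :
    μ.IsOpenPosMeasure := by
  refine ⟨fun U hU ⟨y, hy⟩ hU0 => ?_⟩
  obtain ⟨r, hr, hsub⟩ := Metric.isOpen_iff.1 hU y hy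
  exact (hpos y r hr).ne' (measure_mono_null hsub hU0)

instance upHalf.instSFinite [MeasurableSpace X] (μ : Measure X) [SFinite μ] :
    SFinite (upHalf μ) := by
  unfold upHalf; infer_instance

lemma pos_of_mem_coneAt [PseudoMetricSpace X] {α : ℝ} (hα : 0 < α) {x : X}
    {p : X × ℝ} (hp : p ∈ coneAt α x) : 0 < p.2 :=
  pos_of_mul_pos_right (dist_nonneg.trans_lt hp) hα.le

section Cones

variable [PseudoMetricSpace X] [MeasurableSpace X] [OpensMeasurableSpace X]

lemma measurableSet_coneAt (α : ℝ) (x : X) : MeasurableSet (coneAt α x) :=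
  measurableSet_lt (by fun_prop) (by fun_prop)

variable [SecondCountableTopology X]

lemma measurable_measure_ball_mul (μ : Measure X) [SFinite μ] (α : ℝ) :
    Measurable fun p : X × ℝ => μ (ball p.1 (α * p.2)) :=
  measurable_measure_prodMk_left (ν := μ) (s := {q : (X × ℝ) × X | dist q.2 q.1.1 < α * q.1.2})
    (measurableSet_lt (by fun_prop) (by fun_prop))

lemma measurable_setLIntegral_coneAt (ν : Measure (X × ℝ)) [SFinite ν] (α : ℝ)
    {g : X × ℝ → ℝ≥0∞} (hg : Measurable g) :
    Measurable fun x : X => ∫⁻ p in coneAt α x, g p ∂ν := by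
  have hS : MeasurableSet {z : X × (X × ℝ) | dist z.2.1 z.1 < α * z.2.2} :=
    measurableSet_lt (by fun_prop) (by fun_prop)
  simp_rw [← lintegral_indicator (measurableSet_coneAt α _)]
  exact ((hg.comp measurable_snd).indicator hS).lintegral_prod_right'

end Cones

lemma TotallyBounded.exists_finite_subset_iUnion_coneAt [PseudoMetricSpace X]
    {s D : Set X} (hs : TotallyBounded s) (hD : Dense D) {α a : ℝ} (hα : 0 < α) (ha : 0 < a) :
    ∃ t ⊆ D, t.Finite ∧ s ×ˢ Ioi a ⊆ ⋃ z ∈ t, coneAt α z := by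
  obtain ⟨t₀, ht₀, hcover⟩ := Metric.totallyBounded_iff.1 hs (α * a / 2) (by positivity)
  choose z hzD hz using fun y => hD.exists_dist_lt y (half_pos (mul_pos hα ha))
  refine ⟨z '' t₀, image_subset_iff.2 fun y _ => hzD y, ht₀.image z, ?_⟩
  rintro ⟨x, t⟩ ⟨hx, ht⟩
  obtain ⟨y, hy, hxy⟩ := mem_iUnion₂.1 (hcover hx)
  refine mem_biUnion (mem_image_of_mem z hy) ?_
  calc dist x (z y) ≤ dist x y + dist y (z y) := dist_triangle _ _ _
    _ < α * a / 2 + α * a / 2 := add_lt_add (mem_ball.1 hxy) (hz y)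
    _ = α * a := by ring
    _ < α * t := mul_lt_mul_of_pos_left ht hα

lemma tendsto_setLIntegral_compl_of_monotone {α : Type*} [MeasurableSpace α] {ν : Measure α}
    {g : α → ℝ≥0∞} (hg : Measurable g) (hfin : ∫⁻ a, g a ∂ν ≠ ⊤) {K : ℕ → Set α}
    (hKm : ∀ n, MeasurableSet (K n)) (hK : Monotone K) (hcover : ∀ᵐ a ∂ν, ∃ n, a ∈ K n) :
    Tendsto (fun n => ∫⁻ a in (K n)ᶜ, g a ∂ν) atTop (𝓝 0) := by
  simp_rw [← lintegral_indicator (hKm _).compl]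
  have hlim : ∀ᵐ a ∂ν, Tendsto (fun n => (K n)ᶜ.indicator g a) atTop (𝓝 0) := by
    filter_upwards [hcover] with a ⟨n, hn⟩
    exact tendsto_const_nhds.congr' (eventually_atTop.2
      ⟨n, fun m hm => (indicator_of_notMem (not_not.2 (hK hm hn)) g).symm⟩)
  simpa using tendsto_lintegral_of_dominated_convergence g
    (fun n => hg.indicator (hKm n).compl) (fun n => ae_of_all _ (indicator_le_self _ g)) hfin hlim

lemma ofReal_abs_indicator_rpow {Y : Type*} {g : Y → ℝ} {q : ℝ} (hq : 0 < q) (s : Set Y) :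
    (fun y => ENNReal.ofReal (|s.indicator g y| ^ q))
      = s.indicator fun y => ENNReal.ofReal (|g y| ^ q) := by
  ext y
  by_cases hy : y ∈ s <;> simp [hy, Real.zero_rpow hq.ne']

section TentSpace

variable [PseudoMetricSpace X] [MeasurableSpace X] {μ : Measure X} {p q α : ℝ}
  {f : X × ℝ → ℝ}

def tentDensity (μ : Measure X) (q α : ℝ) (f : X × ℝ → ℝ) (p : X × ℝ) : ℝ≥0∞ :=
  ENNReal.ofReal (|f p| ^ q) / μ (ball p.1 (α * p.2))

lemma Afun_eq (μ : Measure X) (q α : ℝ) (f : X × ℝ → ℝ) (x : X) :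
    Afun μ q α f x = (∫⁻ p in coneAt α x, tentDensity μ q α f p ∂upHalf μ) ^ (1 / q) :=
  rfl

lemma tentDensity_indicator (hq : 0 < q) (s : Set (X × ℝ)) :
    tentDensity μ q α (s.indicator f) = s.indicator (tentDensity μ q α f) := by
  ext p
  by_cases hp : p ∈ s <;> simp [tentDensity, hp, Real.zero_rpow hq.ne']

lemma Afun_indicator_le (hq : 0 < q) (s : Set (X × ℝ)) (x : X) :
    Afun μ q α (s.indicator f) x ≤ Afun μ q α f x := by
  simp only [Afun_eq, tentDensity_indicator hq]
  gcongr with p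
  exact indicator_le_self _ _ p

lemma tNorm_ne_top_iff (hp : 0 < p) :
    tNorm μ p q α f ≠ ⊤ ↔ ∫⁻ x, Afun μ q α f x ^ p ∂μ ≠ ⊤ := by
  rw [tNorm, ne_eq, ENNReal.rpow_eq_top_iff_of_pos (by positivity)]

lemma Afun_ne_top_iff (hq : 0 < q) {x : X} :
    Afun μ q α f x ≠ ⊤ ↔ ∫⁻ y in coneAt α x, tentDensity μ q α f y ∂upHalf μ ≠ ⊤ := by
  rw [Afun_eq, ne_eq, ENNReal.rpow_eq_top_iff_of_pos (by positivity)]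

lemma setLIntegral_tentDensity_lt_top [SFinite μ] (hq : 0 < q) (hα : 0 < α) {s : Set X}
    (hs : TotallyBounded s) (hdense : Dense {x | Afun μ q α f x ≠ ⊤}) {a : ℝ} (ha : 0 < a) :
    ∫⁻ y in s ×ˢ Ioi a, tentDensity μ q α f y ∂upHalf μ < ⊤ := by
  obtain ⟨t, htD, ht, hcover⟩ := hs.exists_finite_subset_iUnion_coneAt hdense hα ha
  calc ∫⁻ y in s ×ˢ Ioi a, tentDensity μ q α f y ∂upHalf μ
      ≤ ∫⁻ y in ⋃ z ∈ t, coneAt α z, tentDensity μ q α f y ∂upHalf μ := lintegral_mono_set hcover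
    _ = (upHalf μ).withDensity (tentDensity μ q α f) (⋃ z ∈ t, coneAt α z) :=
        (withDensity_apply' _ _).symm
    _ < ⊤ := measure_biUnion_lt_top ht fun z hz => by
        rw [withDensity_apply']
        exact lt_top_iff_ne_top.2 ((Afun_ne_top_iff hq).1 (htD hz))

variable [OpensMeasurableSpace X] [SecondCountableTopology X] [SFinite μ]

lemma measurable_tentDensity (hf : Measurable f) : Measurable (tentDensity μ q α f) :=
  (hf.abs.pow_const q).ennreal_ofReal.div (measurable_measure_ball_mul μ α)

lemma measurable_Afun (hf : Measurable f) : Measurable (Afun μ q α f) :=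
  (measurable_setLIntegral_coneAt _ α (measurable_tentDensity hf)).pow_const _

lemma ae_Afun_ne_top (hp : 0 < p) (hf : Measurable f) (hfT : tNorm μ p q α f ≠ ⊤) :
    ∀ᵐ x ∂μ, Afun μ q α f x ≠ ⊤ := by
  filter_upwards [ae_lt_top ((measurable_Afun hf).pow_const p) ((tNorm_ne_top_iff hp).1 hfT)]
    with x hx hx_top
  simp [hx_top, hp] at hx

variable {K : ℕ → Set (X × ℝ)}

lemma tendsto_Afun_indicator_compl (hq : 0 < q) (hα : 0 < α) (hf : Measurable f)
    (hKm : ∀ n, MeasurableSet (K n)) (hK : Monotone K)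
    (hcover : ∀ y : X × ℝ, 0 < y.2 → ∃ n, y ∈ K n)
    {x : X} (hx : Afun μ q α f x ≠ ⊤) :
    Tendsto (fun n => Afun μ q α ((K n)ᶜ.indicator f) x) atTop (𝓝 0) := by
  have hcone : ∀ᵐ y ∂(upHalf μ).restrict (coneAt α x), ∃ n, y ∈ K n :=
    (ae_restrict_iff' (measurableSet_coneAt α x)).2
      (ae_of_all _ fun y hy => hcover y (pos_of_mem_coneAt hα hy))
  have h := (tendsto_setLIntegral_compl_of_monotone (measurable_tentDensity hf)
    ((Afun_ne_top_iff hq).1 hx) hKm hK hcone).ennrpow_const (1 / q)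
  rw [ENNReal.zero_rpow_of_pos (by positivity)] at h
  refine h.congr fun n => ?_
  rw [Afun_eq, tentDensity_indicator hq, lintegral_indicator (hKm n).compl]

theorem tendsto_tNorm_indicator_compl (hp : 0 < p) (hq : 0 < q) (hα : 0 < α)
    (hf : Measurable f) (hfT : tNorm μ p q α f ≠ ⊤) (hKm : ∀ n, MeasurableSet (K n))
    (hK : Monotone K) (hcover : ∀ y : X × ℝ, 0 < y.2 → ∃ n, y ∈ K n) :
    Tendsto (fun n => tNorm μ p q α ((K n)ᶜ.indicator f)) atTop (𝓝 0) := by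
  have hlim : ∀ᵐ x ∂μ, Tendsto (fun n => Afun μ q α ((K n)ᶜ.indicator f) x ^ p) atTop (𝓝 0) := by
    filter_upwards [ae_Afun_ne_top hp hf hfT] with x hx
    have h := (tendsto_Afun_indicator_compl hq hα hf hKm hK hcover hx).ennrpow_const p
    rwa [ENNReal.zero_rpow_of_pos hp] at h
  have h := tendsto_lintegral_of_dominated_convergence (fun x => Afun μ q α f x ^ p)
    (fun n => (measurable_Afun (hf.indicator (hKm n).compl)).pow_const p)
    (fun n => ae_of_all _ fun x => ENNReal.rpow_le_rpow (Afun_indicator_le hq _ x) hp.le)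
    ((tNorm_ne_top_iff hp).1 hfT) hlim
  rw [lintegral_zero] at h
  have h' := h.ennrpow_const (1 / p)
  rwa [ENNReal.zero_rpow_of_pos (by positivity)] at h'

lemma setLIntegral_rpow_le_mul_setLIntegral_tentDensity
    (hpos : ∀ (x : X) (r : ℝ), 0 < r → 0 < μ (ball x r))
    (hfin : ∀ (x : X) (r : ℝ), 0 < r → μ (ball x r) < ∞) (hα : 0 < α) (hf : Measurable f)
    (x₀ : X) {R a b : ℝ} (ha : 0 ≤ a) :
    ∫⁻ y in ball x₀ R ×ˢ Ioo a b, ENNReal.ofReal (|f y| ^ q) ∂upHalf μ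
      ≤ (∫⁻ y in ball x₀ R ×ˢ Ioo a b, tentDensity μ q α f y ∂upHalf μ)
          * μ (ball x₀ (R + α * b)) := by
  rw [← lintegral_mul_const _ (measurable_tentDensity hf)]
  refine setLIntegral_mono ((measurable_tentDensity hf).mul_const _) fun y ⟨hy₁, hy₂⟩ => ?_
  have ht : 0 < α * y.2 := mul_pos hα (ha.trans_lt hy₂.1)
  have hsub : ball y.1 (α * y.2) ⊆ ball x₀ (R + α * b) :=
    ball_subset_ball' (by nlinarith [mem_ball.1 hy₁, hy₂.2])
  calc ENNReal.ofReal (|f y| ^ q) = tentDensity μ q α f y * μ (ball y.1 (α * y.2)) :=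
        (ENNReal.div_mul_cancel (hpos _ _ ht).ne' (hfin _ _ ht).ne).symm
    _ ≤ tentDensity μ q α f y * μ (ball x₀ (R + α * b)) := by gcongr

theorem setLIntegral_rpow_cylinder_lt_top (hpos : ∀ (x : X) (r : ℝ), 0 < r → 0 < μ (ball x r))
    (hfin : ∀ (x : X) (r : ℝ), 0 < r → μ (ball x r) < ∞) (hq : 0 < q) (hα : 0 < α)
    (hf : Measurable f) (hdense : Dense {x | Afun μ q α f x ≠ ⊤}) {x₀ : X} {R a b : ℝ}
    (hR : 0 < R) (ha : 0 < a) (hb : 0 < b) (hTB : TotallyBounded (ball x₀ R)) :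
    ∫⁻ y in ball x₀ R ×ˢ Ioo a b, ENNReal.ofReal (|f y| ^ q) ∂upHalf μ < ⊤ := by
  refine (setLIntegral_rpow_le_mul_setLIntegral_tentDensity hpos hfin hα hf x₀ ha.le).trans_lt
    (ENNReal.mul_lt_top ?_ (hfin _ _ (by positivity)))
  exact (lintegral_mono_set (prod_mono subset_rfl Ioo_subset_Ioi_self)).trans_lt
    (setLIntegral_tentDensity_lt_top hq hα hTB hdense ha)

end TentSpace

section Truncation

variable [PseudoMetricSpace X]

def truncCyl (x₀ : X) (n : ℕ) : Set (X × ℝ) := ball x₀ n ×ˢ Ioo (n : ℝ)⁻¹ n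

lemma measurableSet_truncCyl [MeasurableSpace X] [OpensMeasurableSpace X] (x₀ : X) (n : ℕ) :
    MeasurableSet (truncCyl x₀ n) :=
  measurableSet_ball.prod measurableSet_Ioo

lemma monotone_truncCyl (x₀ : X) : Monotone (truncCyl x₀) := by
  intro m n hmn
  rcases Nat.eq_zero_or_pos m with rfl | hm
  · simp [truncCyl]
  have hm' : (0 : ℝ) < m := by exact_mod_cast hm
  have hmn' : (m : ℝ) ≤ n := by exact_mod_cast hmn
  exact prod_mono (ball_subset_ball hmn') (Ioo_subset_Ioo (inv_anti₀ hm' hmn') hmn')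

lemma exists_mem_truncCyl (x₀ : X) {y : X × ℝ} (hy : 0 < y.2) : ∃ n, y ∈ truncCyl x₀ n := by
  obtain ⟨n, hn⟩ := exists_nat_gt (max (dist y.1 x₀) (max y.2 y.2⁻¹))
  simp only [max_lt_iff] at hn
  exact ⟨n, mem_ball.2 hn.1, inv_lt_of_inv_lt₀ hy hn.2.2, hn.2.1⟩

end Truncation

/-- **Density of cylindrically supported `L^q` functions.** If `μ` is doubling,
`p,q,α > 0` and `‖f‖_{T^{p,q,α}} < ∞`, then for every `ε > 0` and every `x₀ ∈ X`,
for all large `n` the truncation `g = 1_{B(x₀,n) × (1/n,n)} f` lies in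
`L^q(X⁺, dμ dt/t)` and satisfies `‖f - g‖_{T^{p,q,α}} < ε`. -/
theorem cylindrical_dense [MetricSpace X] [MeasurableSpace X] [BorelSpace X]
    (μ : Measure X) [SigmaFinite μ]
    (hpos : ∀ (x : X) (r : ℝ), 0 < r → 0 < μ (ball x r))
    (hfin : ∀ (x : X) (r : ℝ), 0 < r → μ (ball x r) < ∞)
    (hdb : DoublingMeas μ)
    (p q α : ℝ) (hp : 0 < p) (hq : 0 < q) (hα : 0 < α)
    (f : X × ℝ → ℝ) (hf : Measurable f) (hfT : tNorm μ p q α f < ∞)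
    (x₀ : X) (ε : ℝ) (hε : 0 < ε) :
    ∃ N : ℕ, ∀ n ≥ N,
      (∫⁻ pt, ENNReal.ofReal
          (|(ball x₀ (n:ℝ) ×ˢ Ioo ((n:ℝ)⁻¹) (n:ℝ)).indicator f pt| ^ q) ∂upHalf μ) < ∞ ∧
      tNorm μ p q α (f - (ball x₀ (n:ℝ) ×ˢ Ioo ((n:ℝ)⁻¹) (n:ℝ)).indicator f)
        < ENNReal.ofReal ε := by
  have hTB : ∀ R : ℝ, TotallyBounded (ball x₀ R) := hdb.totallyBounded_ball hpos hfin x₀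
  have := secondCountableTopology_of_totallyBounded_ball x₀ hTB
  have := isOpenPosMeasure_of_measure_ball_pos hpos
  have hdense : Dense {x | Afun μ q α f x ≠ ⊤} := μ.dense_of_ae (ae_Afun_ne_top hp hf hfT.ne)
  have hsmall := (tendsto_tNorm_indicator_compl hp hq hα hf hfT.ne (measurableSet_truncCyl x₀)
    (monotone_truncCyl x₀) fun y hy => exists_mem_truncCyl x₀ hy).eventually
      (gt_mem_nhds (ENNReal.ofReal_pos.2 hε))
  obtain ⟨N, hN⟩ := eventually_atTop.1 hsmall
  refine ⟨max N 1, fun n hn => ⟨?_, ?_⟩⟩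
  · have hn' : (0 : ℝ) < n := by exact_mod_cast (le_of_max_le_right hn)
    rw [ofReal_abs_indicator_rpow hq,
      lintegral_indicator (measurableSet_ball.prod measurableSet_Ioo)]
    exact setLIntegral_rpow_cylinder_lt_top hpos hfin hq hα hf hdense hn' (inv_pos.2 hn') hn'
      (hTB n)
  · rw [← indicator_compl]
    exact hN n (le_of_max_le_left hn)
end
end

section
/- Positivity of the covering constants: Let α > 0 and let K ⊂ X⁺ be a nonempty cylindrical set. Define β₁(K) := inf{μ(B) : B an open ball in X with T^α(B) ⊃ K} and β₀(K) := inf{μ(B) : B an open ball in X with T^α(B) ∩ K ≠ ∅}. Then β₁(K) ≥ μ(S^α(K)) > 0, and if moreover μ is doubling then β₀(K) > 0. -/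
open MeasureTheory Metric Set
open scoped ENNReal NNReal

noncomputable section

variable {X : Type*}

/-- **Positivity of the covering constants (Lemma `betas`).** Let `α > 0` and let
`K ⊆ X⁺` be a nonempty cylindrical set. With
`β₁(K) = inf{μ(B) : B an open ball, T^α(B) ⊇ K}` and
`β₀(K) = inf{μ(B) : B an open ball, T^α(B) ∩ K ≠ ∅}`, one has
`β₁(K) ≥ μ(S^α(K)) > 0`; and if moreover `μ` is doubling, then `β₀(K) > 0`. -/
theorem covering_constants_positive [MetricSpace X] [MeasurableSpace X] [BorelSpace X]
    (μ : Measure X)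
    (hpos : ∀ (x : X) (r : ℝ), 0 < r → 0 < μ (ball x r))
    (hfin : ∀ (x : X) (r : ℝ), 0 < r → μ (ball x r) < ∞)
    (α : ℝ) (hα : 0 < α)
    (x₀ : X) (r a b : ℝ) (hr : 0 < r) (ha : 0 < a) (hb : 0 < b)
    (K : Set (X × ℝ)) (hKne : K.Nonempty) (hKc : K ⊆ ball x₀ r ×ˢ Ioo a b) :
    μ (shadowOf α K)
        ≤ (⨅ (z : X) (ρ : ℝ) (_ : 0 < ρ ∧ K ⊆ tentOver α (ball z ρ)), μ (ball z ρ)) ∧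
      0 < μ (shadowOf α K) ∧
      (DoublingMeas μ →
        0 < ⨅ (z : X) (ρ : ℝ) (_ : 0 < ρ ∧ (tentOver α (ball z ρ) ∩ K).Nonempty),
              μ (ball z ρ)) := by
  constructor
  · -- β₁ ≥ μ(shadow)
    refine le_iInf fun z => le_iInf fun ρ => le_iInf fun h => ?_
    obtain ⟨hρ, hKT⟩ := h
    refine measure_mono fun x hx => ?_
    obtain ⟨p, hpK, hpc⟩ := hx
    by_contra hxz
    have ht := hKT hpK
    exact absurd hpc (not_lt.2 (ht.2 x hxz))
  obtain ⟨p, hpK⟩ := hKne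
  obtain ⟨hp1, hp2⟩ := hKc hpK
  have hpt : 0 < p.2 := lt_trans ha hp2.1
  constructor
  · -- positivity of shadow
    refine lt_of_lt_of_le (hpos p.1 (α * p.2) (mul_pos hα hpt)) (measure_mono ?_)
    intro x hx
    exact ⟨p, hpK, by simpa [coneAt, dist_comm] using hx⟩
  · rintro ⟨C, hC0, hC⟩
    -- iterated doubling
    have hiter : ∀ (n : ℕ) (y : X) (s : ℝ), 0 < s →
        μ (ball y (2 ^ n * s)) ≤ (ENNReal.ofReal C) ^ n * μ (ball y s) := by
      intro n
      induction n with
      | zero => intro y s hs; simp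
      | succ n ih =>
        intro y s hs
        have h2 : (2:ℝ) ^ (n+1) * s = 2 * (2 ^ n * s) := by ring
        calc μ (ball y (2 ^ (n+1) * s)) = μ (ball y (2 * (2 ^ n * s))) := by rw [h2]
          _ ≤ ENNReal.ofReal C * μ (ball y (2 ^ n * s)) :=
              hC y _ (by positivity)
          _ ≤ ENNReal.ofReal C * ((ENNReal.ofReal C) ^ n * μ (ball y s)) :=
              mul_le_mul_right (ih y s hs) _
          _ = (ENNReal.ofReal C) ^ (n+1) * μ (ball y s) := by ring
    obtain ⟨n, hn⟩ := pow_unbounded_of_one_lt ((2*r) / (α * a)) (one_lt_two (α := ℝ))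
    have haa : 0 < α * a := mul_pos hα ha
    have h2r : 2 * r < 2 ^ n * (α * a) := by
      rwa [div_lt_iff₀ haa] at hn
    set Cn : ℝ≥0∞ := (ENNReal.ofReal C) ^ n with hCn
    have hCn0 : Cn ≠ 0 := by
      simp [hCn, ENNReal.ofReal_pos.2 hC0, pow_ne_zero, (ENNReal.ofReal_pos.2 hC0).ne']
    have hCntop : Cn ≠ ∞ := by
      simp [hCn, ENNReal.pow_ne_top, ENNReal.ofReal_ne_top]
    have hεpos : 0 < Cn⁻¹ * μ (ball x₀ r) :=
      ENNReal.mul_pos (ENNReal.inv_ne_zero.2 hCntop) (hpos x₀ r hr).ne'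
    refine lt_of_lt_of_le hεpos (le_iInf fun z => le_iInf fun ρ => le_iInf fun h => ?_)
    obtain ⟨hρ, q, hqT, hqK⟩ := h
    obtain ⟨hq1, hq2⟩ := hKc hqK
    have hqt : a < q.2 := hq2.1
    -- ball q.1 (α * q.2) ⊆ ball z ρ
    have hball : ball q.1 (α * a) ⊆ ball z ρ := by
      intro w hw
      by_contra hwz
      have := hqT.2 w hwz
      have hlt : dist q.1 w < α * q.2 := by
        rw [dist_comm]
        calc dist w q.1 < α * a := mem_ball.1 hw
          _ ≤ α * q.2 := by nlinarith
      exact absurd this (not_le.2 hlt)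
    have hbig : ball x₀ r ⊆ ball q.1 (2 ^ n * (α * a)) := by
      intro w hw
      have h1 : dist w q.1 ≤ dist w x₀ + dist x₀ q.1 := dist_triangle w x₀ q.1
      have h2 : dist x₀ q.1 < r := by rw [dist_comm]; exact hq1
      calc dist w q.1 < 2 * r := by
            have := mem_ball.1 hw; linarith
        _ < 2 ^ n * (α * a) := h2r
      |>.trans_le le_rfl
    have hchain : μ (ball x₀ r) ≤ Cn * μ (ball z ρ) :=
      calc μ (ball x₀ r) ≤ μ (ball q.1 (2 ^ n * (α * a))) := measure_mono hbig
        _ ≤ Cn * μ (ball q.1 (α * a)) := hiter n q.1 (α * a) haa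
        _ ≤ Cn * μ (ball z ρ) := mul_le_mul_right (measure_mono hball) _
    calc Cn⁻¹ * μ (ball x₀ r) ≤ Cn⁻¹ * (Cn * μ (ball z ρ)) :=
          mul_le_mul_right hchain _
      _ = μ (ball z ρ) := by
          rw [← mul_assoc, ENNReal.inv_mul_cancel hCn0 hCntop, one_mul]
end
end
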